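/- arXiv:2401.03790 — 5 statements merged into one kernel-verified Lean document; each statement's English description precedes it below -/
import Mathlib

section
/- Fix a finite directed graph G = (V, E) in which every node has at least one incoming edge. Consider a message-passing layer that, given node features x_i ∈ ℝ^D for i ∈ V and edge features e_{ji} ∈ ℝ^{D_E} for (j,i) ∈ E, outputs for every node i the updated feature x'_i = f_upd( x_i , f_agg( { f_msg(x_j, x_i, e_{ji}) : (j,i) ∈ E } ) ), where f_msg : ℝ^{2D + D_E} → ℝ^{D'} and f_upd : ℝ^{D + D'} → ℝ^{D''} are FNN-computable functions and f_agg is the coordinatewise mean, the coordinatewise maximum, or the coordinatewise sum over the (fixed-cardinality) collection of incoming messages. Then the whole layer, viewed as a single function from the concatenation of all node and edge features, ℝ^{|V|·D + |E|·D_E}, to the concatenation of all updated node features, ℝ^{|V|·D''}, is FNN-computable. -/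
/-- The three kinds of feed-forward layers: affine transformations,
componentwise ReLU, and max-pooling. -/
inductive LayerKind : Type
  | affine
  | relu
  | maxpool

/-- `IsLayerOfKind K f` says that `f : ℝ^m → ℝ^n` is a feed-forward layer of kind `K`:
an affine map `x ↦ A x + b`, the componentwise ReLU (requiring `n = m`), or a
max-pooling over predefined nonempty subsets of the input coordinates. -/
def IsLayerOfKind {m n : ℕ} (K : LayerKind) (f : (Fin m → ℝ) → (Fin n → ℝ)) : Prop :=
  match K with
  | .affine => ∃ (A : Matrix (Fin n) (Fin m) ℝ) (b : Fin n → ℝ), ∀ x, f x = A.mulVec x + b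
  | .relu => ∃ h : n = m, ∀ x j, f x j = max 0 (x (Fin.cast h j))
  | .maxpool => ∃ (P : Fin n → Finset (Fin m)) (hP : ∀ j, (P j).Nonempty),
      ∀ x j, f x j = (P j).sup' (hP j) x

/-- A feed-forward layer is a layer of one of the three kinds. -/
def IsLayer {m n : ℕ} (f : (Fin m → ℝ) → (Fin n → ℝ)) : Prop :=
  ∃ K : LayerKind, IsLayerOfKind K f

/-- `FNNComputes l m n f` says that `f : ℝ^m → ℝ^n` is computed by an `l`-layered
feed-forward neural network, i.e. `f` is a composition of `l` feed-forward layers. -/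
inductive FNNComputes : ℕ → (m : ℕ) → (n : ℕ) → ((Fin m → ℝ) → (Fin n → ℝ)) → Prop
  | id (m : ℕ) : FNNComputes 0 m m id
  | succ {l m k n : ℕ} {f : (Fin m → ℝ) → (Fin k → ℝ)} {g : (Fin k → ℝ) → (Fin n → ℝ)} :
      FNNComputes l m k f → IsLayer g → FNNComputes (l + 1) m n (g ∘ f)

/-- A function is FNN-computable if some feed-forward neural network computes it. -/
def FNNComputable {m n : ℕ} (f : (Fin m → ℝ) → (Fin n → ℝ)) : Prop :=
  ∃ l, FNNComputes l m n f

/-- Composition of a chain of functions `g 0, g 1, …` with compatible dimensions: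
`chainComp d g k = g (k-1) ∘ ⋯ ∘ g 0`. -/
def chainComp (d : ℕ → ℕ) (g : (i : ℕ) → (Fin (d i) → ℝ) → (Fin (d (i + 1)) → ℝ)) :
    (k : ℕ) → (Fin (d 0) → ℝ) → (Fin (d k) → ℝ)
  | 0 => id
  | k + 1 => g k ∘ chainComp d g k

/-- Concatenation of two vectors. -/
def cat {a b : ℕ} (x : Fin a → ℝ) (y : Fin b → ℝ) : Fin (a + b) → ℝ :=
  Fin.addCases (motive := fun _ => ℝ) x y

/-- The three aggregation functions allowed in a message-passing layer:
coordinatewise mean, maximum, and sum. -/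
inductive AggKind : Type
  | mean
  | max
  | sum

/-- Coordinatewise aggregation of a (nonempty, fixed-cardinality) finite collection
of vectors `v p ∈ ℝ^D`, `p ∈ s`, by mean, max, or sum. -/
noncomputable def aggregate (K : AggKind) {D : ℕ} {ι : Type} (s : Finset ι)
    (hs : s.Nonempty) (v : ι → Fin D → ℝ) : Fin D → ℝ :=
  match K with
  | .mean => fun c => (∑ p ∈ s, v p c) / (s.card : ℝ)
  | .max => fun c => s.sup' hs (fun p => v p c)
  | .sum => fun c => ∑ p ∈ s, v p c

/-- A message-passing layer on a fixed finite directed graph `(V, E)` in which every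
node has at least one incoming edge: node `i` is updated to
`x'_i = f_upd (x_i, f_agg {f_msg (x_j, x_i, e_{ji}) : (j,i) ∈ E})`. -/
noncomputable def mpLayer {V : Type} [DecidableEq V] (E : Finset (V × V))
    (hE : ∀ i : V, (E.filter fun p => p.2 = i).Nonempty)
    {D DE D' D'' : ℕ}
    (fmsg : (Fin (D + D + DE) → ℝ) → (Fin D' → ℝ))
    (fupd : (Fin (D + D') → ℝ) → (Fin D'' → ℝ))
    (K : AggKind)
    (x : V → Fin D → ℝ) (eF : {p : V × V // p ∈ E} → Fin DE → ℝ)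
    (i : V) : Fin D'' → ℝ :=
  fupd (cat (x i)
    (aggregate K (E.filter fun p => p.2 = i).attach
      (Finset.attach_nonempty_iff.mpr (hE i))
      (fun p => fmsg (cat (cat (x p.1.1) (x i)) (eF ⟨p.1, (Finset.mem_filter.mp p.2).1⟩)))))

/-!
The layer factors into three FNN-computable stages on the flattened coordinates: append the
message `fmsg (x_j, x_i, e_{ji})` of every edge to the input (each is `fmsg` applied to a
selection of coordinates), aggregate the messages arriving at each node next to a copy of its own
feature (one affine layer for sum and mean, one max-pooling layer for max), and apply `fupd` to
the block of each node. Running several networks side by side only needs a way to carry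
coordinates unchanged through a ReLU layer, which `t = max 0 t - max 0 (-t)` provides.
-/

open Finset
open scoped Matrix

theorem IsLayer.fnnComputable {m n : ℕ} {g : (Fin m → ℝ) → (Fin n → ℝ)}
    (hg : IsLayer g) : FNNComputable g :=
  ⟨1, .succ (.id m) hg⟩

theorem FNNComputes.comp_fnnComputable {l k n : ℕ} {g : (Fin k → ℝ) → (Fin n → ℝ)}
    (hg : FNNComputes l k n g) : ∀ {m : ℕ} {f : (Fin m → ℝ) → (Fin k → ℝ)},
      FNNComputable f → FNNComputable (g ∘ f) := by
  induction hg with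
  | id => exact fun hf => hf
  | succ _ hlayer ih =>
    intro m f hf
    obtain ⟨l, hl⟩ := ih hf
    exact ⟨l + 1, hl.succ hlayer⟩

theorem FNNComputable.comp {m k n : ℕ} {g : (Fin k → ℝ) → (Fin n → ℝ)}
    {f : (Fin m → ℝ) → (Fin k → ℝ)} (hg : FNNComputable g) (hf : FNNComputable f) :
    FNNComputable (g ∘ f) :=
  hg.choose_spec.comp_fnnComputable hf

/-- FNN-computability of a map between coordinate spaces indexed by arbitrary types, in every
numbering of the coordinates by some `Fin m` (vacuous when an index type is infinite). -/
def FNNRealizable {ι κ : Type*} (F : (ι → ℝ) → (κ → ℝ)) : Prop :=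
  ∀ ⦃m n : ℕ⦄ (e : ι ≃ Fin m) (e' : κ ≃ Fin n),
    FNNComputable fun x => F (x ∘ e) ∘ e'.symm

variable {ι ι' κ κ' μ γ : Type*}

theorem FNNRealizable.fnnComputable {m n : ℕ} {f : (Fin m → ℝ) → (Fin n → ℝ)}
    (hf : FNNRealizable f) : FNNComputable f :=
  hf (.refl _) (.refl _)

theorem FNNRealizable.comp [Finite κ] {G : (κ → ℝ) → (μ → ℝ)}
    {F : (ι → ℝ) → (κ → ℝ)} (hG : FNNRealizable G) (hF : FNNRealizable F) :
    FNNRealizable (G ∘ F) := by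
  intro m n e e''
  obtain ⟨k, ⟨e'⟩⟩ := Finite.exists_equiv_fin κ
  convert (hG e' e'').comp (hF e e') using 2 with x
  simp [Function.comp_assoc]

theorem fnnRealizable_mulVec_add [Fintype ι] (A : Matrix κ ι ℝ) (b : κ → ℝ) :
    FNNRealizable fun x => A *ᵥ x + b := by
  intro m n e e'
  refine IsLayer.fnnComputable ⟨.affine, A.submatrix e'.symm e.symm, b ∘ e'.symm, fun x => ?_⟩
  rw [Matrix.submatrix_mulVec_equiv]
  rfl

theorem IsLinearMap.fnnRealizable [Fintype ι] [DecidableEq ι] {F : (ι → ℝ) → (κ → ℝ)}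
    (hF : IsLinearMap ℝ F) : FNNRealizable F := by
  simpa using fnnRealizable_mulVec_add (LinearMap.toMatrix' hF.mk') 0

theorem fnnRealizable_sup' (P : κ → Finset ι) (hP : ∀ k, (P k).Nonempty) :
    FNNRealizable fun x k => (P k).sup' (hP k) x := by
  intro m n e e'
  refine IsLayer.fnnComputable
    ⟨.maxpool, fun j => (P (e'.symm j)).map e.toEmbedding, fun j => (hP _).map, fun x j => ?_⟩
  rw [Finset.sup'_map]
  rfl

theorem fnnRealizable_reindex (σ : κ → ι) : FNNRealizable fun x : ι → ℝ => x ∘ σ := by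
  convert fnnRealizable_sup' (fun k => {σ k}) (fun _ => singleton_nonempty _) using 3
  simp

theorem fnnRealizable_relu : FNNRealizable fun (x : ι → ℝ) i => max 0 (x i) := by
  intro m n e e'
  have hrelu : IsLayer fun (y : Fin n → ℝ) j => max 0 (y j) := ⟨.relu, rfl, fun _ _ => rfl⟩
  exact hrelu.fnnComputable.comp (fnnRealizable_reindex (e ∘ e'.symm)).fnnComputable

theorem FNNComputable.fnnRealizable {a b : ℕ} {f : (Fin a → ℝ) → (Fin b → ℝ)}
    (hf : FNNComputable f) : FNNRealizable f := fun _ _ e e' =>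
  (fnnRealizable_reindex e'.symm).fnnComputable.comp
    (hf.comp (fnnRealizable_reindex e).fnnComputable)

def parallel (F : (ι → ℝ) → (κ → ℝ)) (G : (ι' → ℝ) → (κ' → ℝ)) (x : ι ⊕ ι' → ℝ) :
    κ ⊕ κ' → ℝ :=
  Sum.elim (F (x ∘ Sum.inl)) (G (x ∘ Sum.inr))

theorem parallel_id_id :
    parallel (id : (ι → ℝ) → ι → ℝ) (id : (ι' → ℝ) → ι' → ℝ) = id :=
  funext fun _ => Sum.elim_comp_inl_inr _

theorem fnnRealizable_parallel_relu_id [Fintype ι] [Fintype γ] [DecidableEq ι]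
    [DecidableEq γ] :
    FNNRealizable (parallel (fun (x : ι → ℝ) i => max 0 (x i)) (id : (γ → ℝ) → γ → ℝ)) := by
  let split : (ι ⊕ γ → ℝ) → (ι ⊕ (γ ⊕ γ) → ℝ) := fun x =>
    Sum.elim (x ∘ .inl) (Sum.elim (x ∘ .inr) (-(x ∘ .inr)))
  let merge : (ι ⊕ (γ ⊕ γ) → ℝ) → (ι ⊕ γ → ℝ) := fun z =>
    Sum.elim (z ∘ .inl) (z ∘ .inr ∘ .inl - z ∘ .inr ∘ .inr)
  have hsplit : IsLinearMap ℝ split :=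
    ⟨fun x y => by ext (_ | _ | _) <;> simp [split, add_comm],
      fun c x => by ext (_ | _ | _) <;> simp [split]⟩
  have hmerge : IsLinearMap ℝ merge :=
    ⟨fun x y => by ext (_ | _) <;> simp [merge]; ring,
      fun c x => by ext (_ | _) <;> simp [merge]; ring⟩
  have heq : parallel (fun (x : ι → ℝ) i => max 0 (x i)) (id : (γ → ℝ) → γ → ℝ) =
      merge ∘ (fun z i => max 0 (z i)) ∘ split := by
    ext x (_ | c)
    · rfl
    · simp only [parallel, merge, split, Function.comp_apply, Sum.elim_inr, Sum.elim_inl,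
        Pi.sub_apply, Pi.neg_apply]
      rw [max_comm 0, max_comm 0, max_zero_sub_max_neg_zero_eq_self]
      rfl
  rw [heq]
  exact hmerge.fnnRealizable.comp (fnnRealizable_relu.comp hsplit.fnnRealizable)

theorem IsLayer.fnnRealizable_parallel_id [Finite γ] {m n : ℕ}
    {g : (Fin m → ℝ) → (Fin n → ℝ)} (hg : IsLayer g) :
    FNNRealizable (parallel g (id : (γ → ℝ) → γ → ℝ)) := by
  classical
  have := Fintype.ofFinite γ
  obtain ⟨K, hK⟩ := hg
  cases K with
  | affine =>
    obtain ⟨A, b, hg⟩ := hK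
    convert fnnRealizable_mulVec_add (Matrix.fromBlocks A 0 0 (1 : Matrix γ γ ℝ))
      (Sum.elim b 0) using 1
    ext x (_ | _) <;> simp [parallel, hg, Matrix.fromBlocks_mulVec]
  | relu =>
    obtain ⟨rfl, hg⟩ := hK
    obtain rfl : g = fun x j => max 0 (x j) := funext fun x => funext (hg x)
    exact fnnRealizable_parallel_relu_id
  | maxpool =>
    obtain ⟨P, hP, hg⟩ := hK
    convert fnnRealizable_sup' (Sum.elim (fun j => (P j).map .inl) (fun c => {Sum.inr c}))
      (by rintro (j | c) <;> simp [hP]) using 1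
    ext x (_ | _) <;> simp [parallel, hg, Finset.sup'_map]

theorem fnnRealizable_parallel_id_of_fnnComputes [Finite γ] {l m n : ℕ}
    {f : (Fin m → ℝ) → (Fin n → ℝ)} (hf : FNNComputes l m n f) :
    FNNRealizable (parallel f (id : (γ → ℝ) → γ → ℝ)) := by
  induction hf with
  | id m => rw [parallel_id_id]; exact fnnRealizable_reindex id
  | succ _ hg ih => exact hg.fnnRealizable_parallel_id.comp ih

namespace FNNRealizable

variable [Finite ι] [Finite ι'] [Finite κ] [Finite κ'] [Finite γ]

theorem parallel_id {F : (ι → ℝ) → (κ → ℝ)} (hF : FNNRealizable F) :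
    FNNRealizable (parallel F (id : (γ → ℝ) → γ → ℝ)) := by
  obtain ⟨m, ⟨e⟩⟩ := Finite.exists_equiv_fin ι
  obtain ⟨n, ⟨e'⟩⟩ := Finite.exists_equiv_fin κ
  obtain ⟨l, hl⟩ := hF e e'
  have hF_eq : parallel F (id : (γ → ℝ) → γ → ℝ) = (fun y => y ∘ Sum.map e' id) ∘
      parallel (fun x => F (x ∘ e) ∘ e'.symm) id ∘ (fun x => x ∘ Sum.map e.symm id) := by
    ext x (_ | _) <;> simp [parallel, Function.comp_def]
  rw [hF_eq]
  exact (fnnRealizable_reindex _).comp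
    ((fnnRealizable_parallel_id_of_fnnComputes hl).comp (fnnRealizable_reindex _))

theorem id_parallel {G : (ι' → ℝ) → (κ' → ℝ)} (hG : FNNRealizable G) :
    FNNRealizable (parallel (id : (γ → ℝ) → γ → ℝ) G) := by
  have hG_eq : parallel (id : (γ → ℝ) → γ → ℝ) G =
      (fun y => y ∘ Sum.swap) ∘ parallel G id ∘ (fun x => x ∘ Sum.swap) := by
    ext x (_ | _) <;> rfl
  rw [hG_eq]
  exact (fnnRealizable_reindex _).comp (hG.parallel_id.comp (fnnRealizable_reindex _))

theorem parallel {F : (ι → ℝ) → (κ → ℝ)} {G : (ι' → ℝ) → (κ' → ℝ)}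
    (hF : FNNRealizable F) (hG : FNNRealizable G) : FNNRealizable (parallel F G) :=
  hF.parallel_id.comp hG.id_parallel

theorem sumElim {F : (ι → ℝ) → (κ → ℝ)} {G : (ι → ℝ) → (κ' → ℝ)}
    (hF : FNNRealizable F) (hG : FNNRealizable G) : FNNRealizable fun x => Sum.elim (F x) (G x) :=
  (hF.parallel hG).comp (fnnRealizable_reindex (Sum.elim id id))

end FNNRealizable

theorem FNNRealizable.pi {α : Type*} [Finite α] [Finite ι] [Finite κ]
    {F : α → (ι → ℝ) → (κ → ℝ)} (hF : ∀ a, FNNRealizable (F a)) :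
    FNNRealizable fun x (p : α × κ) => F p.1 x p.2 := by
  have := Fintype.ofFinite α
  refine Fintype.induction_empty_option (P := fun α _ => ∀ F : α → (ι → ℝ) → κ → ℝ,
    (∀ a, FNNRealizable (F a)) → FNNRealizable fun x (p : α × κ) => F p.1 x p.2)
    ?_ ?_ ?_ α F hF
  · intro α β _ e ih F hF
    have := Finite.of_equiv _ e.symm
    convert (fnnRealizable_reindex (Prod.map e.symm id)).comp
      (ih (fun a => F (e a)) fun a => hF (e a)) using 1
    ext x ⟨b, k⟩
    simp
  · intro F _
    convert fnnRealizable_reindex (fun p : PEmpty × κ => p.1.elim) using 1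
    ext x p
    exact p.1.elim
  · intro α _ ih F hF
    have h := (hF none).sumElim (ih (fun a => F (some a)) fun a => hF (some a))
    convert (fnnRealizable_reindex
      fun p : Option α × κ => p.1.elim (.inl p.2) fun a => .inr (a, p.2)).comp h using 1
    ext x ⟨_ | a, k⟩ <;> rfl

theorem fnnRealizable_aggregate {α κ : Type} [Finite α] {β : κ → Type} (K : AggKind)
    {D : ℕ} (s : ∀ k, Finset (β k)) (hs : ∀ k, (s k).Nonempty) (f : ∀ k, β k → α) :
    FNNRealizable fun (w : α × Fin D → ℝ) (p : κ × Fin D) =>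
      aggregate K (s p.1) (hs p.1) (fun b c => w (f p.1 b, c)) p.2 := by
  classical
  have := Fintype.ofFinite α
  cases K with
  | mean =>
    refine IsLinearMap.fnnRealizable ⟨fun x y => ?_, fun c x => ?_⟩ <;> ext p <;>
      simp [aggregate, sum_add_distrib, add_div, ← mul_sum, mul_div_assoc]
  | max =>
    convert fnnRealizable_sup' (fun p : κ × Fin D => (s p.1).image fun b => (f p.1 b, p.2))
      (fun p => (hs p.1).image _) using 1
    ext w p
    simp [aggregate, Finset.sup'_image]
  | sum =>
    refine IsLinearMap.fnnRealizable ⟨fun x y => ?_, fun c x => ?_⟩ <;> ext p <;>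
      simp [aggregate, sum_add_distrib, mul_sum]

theorem cat_comp_eq_comp_append {α : Type*} {a b : ℕ} (y : α → ℝ) (u : Fin a → α) (v : Fin b → α) :
    cat (y ∘ u) (y ∘ v) = y ∘ Fin.append u v := by
  ext j
  refine Fin.addCases (fun i => ?_) (fun i => ?_) j <;> simp [cat]

theorem FNNRealizable.catBlocks [Finite ι] [Finite κ] {a b : ℕ}
    {F : (ι → ℝ) → (κ × Fin a → ℝ)} {G : (ι → ℝ) → (κ × Fin b → ℝ)} (hF : FNNRealizable F)
    (hG : FNNRealizable G) :
    FNNRealizable fun x (p : κ × Fin (a + b)) =>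
      cat (fun c => F x (p.1, c)) (fun c => G x (p.1, c)) p.2 := by
  convert (fnnRealizable_reindex fun p : κ × Fin (a + b) =>
    Fin.append (fun c => .inl (p.1, c)) (fun c => .inr (p.1, c)) p.2).comp
      (hF.sumElim hG) using 1
  ext x p
  exact congrFun (cat_comp_eq_comp_append (Sum.elim (F x) (G x))
    (fun c => .inl (p.1, c)) fun c => .inr (p.1, c)) p.2

theorem FNNRealizable.blockwise {V : Type*} [Finite V] [Finite ι] [Finite κ]
    {F : (ι → ℝ) → (κ → ℝ)} (hF : FNNRealizable F) :
    FNNRealizable fun (z : V × ι → ℝ) (p : V × κ) => F (fun c => z (p.1, c)) p.2 :=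
  FNNRealizable.pi fun v => hF.comp (fnnRealizable_reindex fun c => (v, c))

section MessagePassing

variable {V : Type} (E : Finset (V × V)) {D DE D' D'' : ℕ}

abbrev Features (E : Finset (V × V)) (D DE : ℕ) : Type :=
  (V × Fin D) ⊕ ({p : V × V // p ∈ E} × Fin DE)

def edgeMessage (fmsg : (Fin (D + D + DE) → ℝ) → (Fin D' → ℝ)) (y : Features E D DE → ℝ)
    (q : {p : V × V // p ∈ E}) : Fin D' → ℝ :=
  fmsg (cat (cat (fun d => y (.inl (q.1.1, d))) fun d => y (.inl (q.1.2, d)))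
    fun d => y (.inr (q, d)))

theorem fnnRealizable_edgeMessage [Finite V] {fmsg : (Fin (D + D + DE) → ℝ) → (Fin D' → ℝ)}
    (hmsg : FNNComputable fmsg) :
    FNNRealizable fun y (p : {p : V × V // p ∈ E} × Fin D') =>
      edgeMessage E fmsg y p.1 p.2 := by
  refine FNNRealizable.pi (F := fun q y => edgeMessage E fmsg y q) fun q => ?_
  let input : Fin (D + D + DE) → Features E D DE :=
    Fin.append (Fin.append (fun d => .inl (q.1.1, d)) fun d => .inl (q.1.2, d))
      fun d => .inr (q, d)
  convert hmsg.fnnRealizable.comp (fnnRealizable_reindex input) using 1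
  ext y : 1
  rw [Function.comp_apply, ← cat_comp_eq_comp_append, ← cat_comp_eq_comp_append]
  rfl

variable [DecidableEq V]

noncomputable def aggregateIncoming (hE : ∀ i : V, (E.filter fun p => p.2 = i).Nonempty)
    (K : AggKind) (w : Features E D DE ⊕ ({p : V × V // p ∈ E} × Fin D') → ℝ)
    (p : V × Fin (D + D')) : ℝ :=
  cat (fun d => w (.inl (.inl (p.1, d))))
    (aggregate K (E.filter fun q => q.2 = p.1).attach (attach_nonempty_iff.mpr (hE p.1))
      fun b c => w (.inr (⟨b.1, (mem_filter.mp b.2).1⟩, c))) p.2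

theorem fnnRealizable_aggregateIncoming [Finite V]
    (hE : ∀ i : V, (E.filter fun p => p.2 = i).Nonempty) (K : AggKind) :
    FNNRealizable (aggregateIncoming E hE K (D := D) (DE := DE) (D' := D')) := by
  have hnodes := fnnRealizable_reindex
    (ι := Features E D DE ⊕ ({p : V × V // p ∈ E} × Fin D')) fun p => .inl (.inl p)
  have hmsgs := (fnnRealizable_aggregate K (fun i => (E.filter fun q => q.2 = i).attach)
      (fun i => attach_nonempty_iff.mpr (hE i)) (fun _ b => ⟨b.1, (mem_filter.mp b.2).1⟩)).comp
    (fnnRealizable_reindex (ι := Features E D DE ⊕ ({p : V × V // p ∈ E} × Fin D')) .inr)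
  exact hnodes.catBlocks hmsgs

theorem mpLayer_eq_aggregateIncoming (hE : ∀ i : V, (E.filter fun p => p.2 = i).Nonempty)
    (fmsg : (Fin (D + D + DE) → ℝ) → (Fin D' → ℝ)) (fupd : (Fin (D + D') → ℝ) → (Fin D'' → ℝ))
    (K : AggKind) (y : Features E D DE → ℝ) (i : V) :
    mpLayer E hE fmsg fupd K (fun i d => y (.inl (i, d))) (fun q d => y (.inr (q, d))) i =
      fupd fun c =>
        aggregateIncoming E hE K (Sum.elim y fun p => edgeMessage E fmsg y p.1 p.2) (i, c) := by
  have hmsg : (fun b : {q // q ∈ E.filter fun q => q.2 = i} =>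
      fmsg (cat (cat (fun d => y (.inl (b.1.1, d))) fun d => y (.inl (i, d)))
        fun d => y (.inr (⟨b.1, (mem_filter.mp b.2).1⟩, d)))) =
      fun b => edgeMessage E fmsg y ⟨b.1, (mem_filter.mp b.2).1⟩ := by
    ext ⟨⟨j, i'⟩, hb⟩ : 1
    obtain ⟨-, rfl : i' = i⟩ := mem_filter.mp hb
    rfl
  rw [mpLayer, hmsg]
  rfl

end MessagePassing

/-- **A message-passing layer on a fixed graph is FNN-computable (Lemma 3).**
Fix a finite directed graph `(V, E)` in which every node has an incoming edge,
FNN-computable message and update functions `fmsg : ℝ^{D+D+DE} → ℝ^{D'}` and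
`fupd : ℝ^{D+D'} → ℝ^{D''}`, and an aggregation kind (mean, max, or sum).
Then the whole layer — viewed, via arbitrary bijective encodings `eIn`, `eOut` of the
node/edge features into coordinates, as a single function from the concatenation
`ℝ^{|V|·D + |E|·DE}` of all node and edge features to the concatenation `ℝ^{|V|·D''}`
of all updated node features — is FNN-computable. -/
theorem mp_layer_is_fnn_computable
    (V : Type) [Fintype V] [DecidableEq V]
    (E : Finset (V × V))
    (hE : ∀ i : V, (E.filter fun p => p.2 = i).Nonempty)
    (D DE D' D'' : ℕ)
    (fmsg : (Fin (D + D + DE) → ℝ) → (Fin D' → ℝ))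
    (fupd : (Fin (D + D') → ℝ) → (Fin D'' → ℝ))
    (hmsg : FNNComputable fmsg) (hupd : FNNComputable fupd)
    (K : AggKind)
    (mIn mOut : ℕ)
    (eIn : ((V × Fin D) ⊕ ({p : V × V // p ∈ E} × Fin DE)) ≃ Fin mIn)
    (eOut : (V × Fin D'') ≃ Fin mOut) :
    FNNComputable (fun (z : Fin mIn → ℝ) (j : Fin mOut) =>
      mpLayer E hE fmsg fupd K
        (fun i d => z (eIn (Sum.inl (i, d))))
        (fun p d => z (eIn (Sum.inr (p, d))))
        (eOut.symm j).1 (eOut.symm j).2) := by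
  have hmessages := (fnnRealizable_reindex id).sumElim (fnnRealizable_edgeMessage E hmsg)
  have hlayer :=
    hupd.fnnRealizable.blockwise.comp ((fnnRealizable_aggregateIncoming E hE K).comp hmessages)
  convert hlayer eIn eOut using 2 with z
  ext j
  exact congrFun (mpLayer_eq_aggregateIncoming E hE fmsg fupd K (z ∘ eIn) _) _
end

section
/- Fix a finite directed graph structure S = (V, E) in which every node has at least one incoming edge, and let M be a graph neural network given as a composition of k message-passing layers, where each layer updates node features by x'_i = f_upd( x_i , f_agg( { f_msg(x_j, x_i, e_{ji}) : (j,i) ∈ E } ) ) with FNN-computable f_msg and f_upd and with f_agg the coordinatewise mean, maximum, or sum of the incoming messages. Then there exists a feed-forward neural network M_F such that for all node features x : V → ℝ^D and all edge features e : E → ℝ^{D_E}, the output of M on the graph S with these features equals M_F applied to the concatenation of the node and edge features; that is, the prediction of M on the fixed structure S is reducible to an FNN. -/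
/-- The forward computation of a graph neural network on a fixed finite directed graph
`(V, E)`: a composition of message-passing layers, the output node features of each
layer serving as the input node features of the next. `d t` is the node-feature
dimension entering layer `t`, `D' t` the message dimension of layer `t`. -/
noncomputable def gnnForward {V : Type} [DecidableEq V] (E : Finset (V × V))
    (hE : ∀ i : V, (E.filter fun p => p.2 = i).Nonempty)
    {DE : ℕ} (d D' : ℕ → ℕ)
    (fmsg : (t : ℕ) → (Fin (d t + d t + DE) → ℝ) → (Fin (D' t) → ℝ))
    (fupd : (t : ℕ) → (Fin (d t + D' t) → ℝ) → (Fin (d (t + 1)) → ℝ))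
    (K : ℕ → AggKind)
    (x : V → Fin (d 0) → ℝ) (eF : {p : V × V // p ∈ E} → Fin DE → ℝ) :
    (t : ℕ) → V → Fin (d t) → ℝ
  | 0 => x
  | t + 1 => mpLayer E hE (fmsg t) (fupd t) (K t)
      (gnnForward E hE d D' fmsg fupd K x eF t) eF

section Core
open Fin

lemma fnn_comp {l1 l2 m k n : ℕ} {f : (Fin m → ℝ) → (Fin k → ℝ)} {g : (Fin k → ℝ) → (Fin n → ℝ)}
    (hf : FNNComputes l1 m k f) (hg : FNNComputes l2 k n g) :
    FNNComputes (l1 + l2) m n (g ∘ f) := by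
  induction hg with
  | id => exact hf
  | @succ l2' _ k2 n2 g' h hg' hl ih =>
      exact FNNComputes.succ (f := g' ∘ f) (g := h) (ih hf) hl

lemma fnnComputable_comp {m k n : ℕ} {f : (Fin m → ℝ) → (Fin k → ℝ)} {g : (Fin k → ℝ) → (Fin n → ℝ)}
    (hf : FNNComputable f) (hg : FNNComputable g) : FNNComputable (g ∘ f) := by
  obtain ⟨l1, h1⟩ := hf; obtain ⟨l2, h2⟩ := hg; exact ⟨l1 + l2, fnn_comp h1 h2⟩

lemma layer_computable {m n : ℕ} {f : (Fin m → ℝ) → (Fin n → ℝ)} (h : IsLayer f) :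
    FNNComputable f :=
  ⟨1, FNNComputes.succ (FNNComputes.id m) h⟩

lemma affine_computable {m n : ℕ} {f : (Fin m → ℝ) → (Fin n → ℝ)}
    (A : Matrix (Fin n) (Fin m) ℝ) (b : Fin n → ℝ) (h : ∀ x, f x = A.mulVec x + b) :
    FNNComputable f :=
  layer_computable ⟨.affine, A, b, h⟩

lemma coord_computable {m n : ℕ} (σ : Fin n → Fin m) :
    FNNComputable (fun x : Fin m → ℝ => fun j => x (σ j)) := by
  apply affine_computable (fun j i => if i = σ j then 1 else 0) 0
  intro x
  funext j
  simp [Matrix.mulVec, dotProduct, ite_mul, Finset.sum_ite_eq]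

end Core

section Par
open Fin

lemma cat_castAdd {a b : ℕ} (x : Fin a → ℝ) (y : Fin b → ℝ) (i : Fin a) :
    cat x y (Fin.castAdd b i) = x i := Fin.addCases_left i

lemma cat_natAdd {a b : ℕ} (x : Fin a → ℝ) (y : Fin b → ℝ) (j : Fin b) :
    cat x y (Fin.natAdd a j) = y j := Fin.addCases_right j

@[simp] lemma addCases_addNat_self {m : ℕ} {α : Sort*} (l r : Fin m → α) (i : Fin m) :
    Fin.addCases (motive := fun _ => α) l r (i.addNat m) = r i := by
  rw [← Fin.natAdd_eq_addNat]; exact Fin.addCases_right i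

@[simp] lemma cat_addNat_self {a : ℕ} (x y : Fin a → ℝ) (j : Fin a) :
    cat x y (j.addNat a) = y j := by
  rw [← Fin.natAdd_eq_addNat]; exact cat_natAdd x y j

attribute [simp] cat_castAdd cat_natAdd

/-- `g` acting on the first `m` coordinates, identity on the last `p`. -/
def parR {m n : ℕ} (p : ℕ) (g : (Fin m → ℝ) → (Fin n → ℝ)) :
    (Fin (m + p) → ℝ) → (Fin (n + p) → ℝ) :=
  fun x => cat (g (fun i => x (Fin.castAdd p i))) (fun j => x (Fin.natAdd m j))

lemma parR_layer {m n : ℕ} (p : ℕ) {g : (Fin m → ℝ) → (Fin n → ℝ)} (h : IsLayer g) :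
    FNNComputable (parR p g) := by
  obtain ⟨K, hK⟩ := h
  cases K with
  | affine =>
    obtain ⟨A, b, hA⟩ := hK
    apply affine_computable
      (Fin.addCases (motive := fun _ => Fin (m + p) → ℝ)
        (fun jn => cat (A jn) 0)
        (fun jp => cat 0 (fun ip => if ip = jp then 1 else 0)))
      (cat b 0)
    intro x
    funext j
    induction j using Fin.addCases with
    | left jn =>
      simp [parR, hA, Matrix.mulVec, dotProduct, Fin.sum_univ_add]
    | right jp =>
      simp [parR, Matrix.mulVec, dotProduct, Fin.sum_univ_add, ite_mul,
        Finset.sum_ite_eq]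
  | maxpool =>
    obtain ⟨P, hP, hval⟩ := hK
    refine layer_computable ⟨.maxpool,
      Fin.addCases (motive := fun _ => Finset (Fin (m + p)))
        (fun jn => (P jn).image (Fin.castAdd p))
        (fun jp => {Fin.natAdd m jp}), ?_, ?_⟩
    · intro j
      induction j using Fin.addCases with
      | left jn =>
        rw [Fin.addCases_left]
        exact (hP jn).image (Fin.castAdd p)
      | right jp => simp
    · intro x j
      induction j using Fin.addCases with
      | left jn =>
        simp only [parR, cat_castAdd, Fin.addCases_left, hval]
        rw [Finset.sup'_image]
        rfl
      | right jp => simp [parR]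
  | relu =>
    obtain ⟨hnm, hval⟩ := hK
    subst hnm
    have hval' : ∀ x j, g x j = max 0 (x j) := by simpa using hval
    set L1 : (Fin (n + p) → ℝ) → (Fin (n + p + 1) → ℝ) :=
      fun x => cat x (fun _ => 0) with hL1def
    have hL1 : IsLayer L1 := by
      refine ⟨.affine,
        Fin.addCases (motive := fun _ => Fin (n + p) → ℝ)
          (fun j' => fun i => if i = j' then 1 else 0) (fun _ => 0), 0, ?_⟩
      intro x
      funext j
      induction j using Fin.addCases with
      | left j' =>
        simp [L1, Matrix.mulVec, dotProduct, ite_mul, Finset.sum_ite_eq']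
      | right j0 =>
        simp [L1, Matrix.mulVec, dotProduct]
    set P2 : Fin (n + p) → Finset (Fin (n + p + 1)) :=
      Fin.addCases (motive := fun _ => Finset (Fin (n + p + 1)))
        (fun jn => {Fin.castAdd 1 (Fin.castAdd p jn), Fin.last (n + p)})
        (fun jp => {Fin.castAdd 1 (Fin.natAdd n jp)}) with hP2def
    have hP2 : ∀ j, (P2 j).Nonempty := by
      intro j
      induction j using Fin.addCases with
      | left jn => simp [P2]
      | right jp => simp [P2]
    set L2 : (Fin (n + p + 1) → ℝ) → (Fin (n + p) → ℝ) :=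
      fun x j => (P2 j).sup' (hP2 j) x with hL2def
    have hL2 : IsLayer L2 := ⟨.maxpool, P2, hP2, fun _ _ => rfl⟩
    have hlast : ∀ (x : Fin (n + p) → ℝ) (y : Fin 1 → ℝ),
        cat x y (Fin.last (n + p)) = y 0 := by
      intro x y
      have : Fin.last (n + p) = Fin.natAdd (n + p) (0 : Fin 1) := by
        ext; simp
      rw [this, cat_natAdd]
    have hcomp : parR p g = L2 ∘ L1 := by
      funext x j
      induction j using Fin.addCases with
      | left jn =>
        simp [parR, hval', L2, L1, P2, Finset.sup'_insert, Finset.sup'_singleton, hlast]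
        first
        | rfl
        | exact sup_comm _ _
        | exact max_comm _ _
      | right jp =>
        simp [parR, L2, L1, P2]
    rw [hcomp]
    exact fnnComputable_comp (layer_computable hL1) (layer_computable hL2)

lemma parR_computable {m n p : ℕ} {f : (Fin m → ℝ) → (Fin n → ℝ)} (hf : FNNComputable f) :
    FNNComputable (parR p f) := by
  obtain ⟨l, h⟩ := hf
  induction h with
  | id m =>
    have : parR p (id : (Fin m → ℝ) → (Fin m → ℝ)) = id := by
      funext x j
      induction j using Fin.addCases <;> simp [parR]
    rw [this]; exact ⟨0, FNNComputes.id _⟩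
  | @succ l' m' k' n' f' g' hf' hl ih =>
    have heq : parR p (g' ∘ f') = parR p g' ∘ parR p f' := by
      funext x j
      induction j using Fin.addCases <;> simp [parR, Function.comp]
    rw [heq]
    exact fnnComputable_comp ih (parR_layer p hl)

/-- identity on the first `p` coordinates, `g` on the last `m`. -/
def parL {m n : ℕ} (p : ℕ) (g : (Fin m → ℝ) → (Fin n → ℝ)) :
    (Fin (p + m) → ℝ) → (Fin (p + n) → ℝ) :=
  fun x => cat (fun j : Fin p => x (Fin.castAdd m j)) (g (fun i => x (Fin.natAdd p i)))

lemma parL_computable {m n p : ℕ} {f : (Fin m → ℝ) → (Fin n → ℝ)} (hf : FNNComputable f) :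
    FNNComputable (parL p f) := by
  have heq : parL p f =
      (fun y : Fin (n + p) → ℝ => fun j => y (Fin.addCases (Fin.natAdd n) (Fin.castAdd p) j))
      ∘ parR p f
      ∘ (fun x : Fin (p + m) → ℝ => fun i => x (Fin.addCases (Fin.natAdd p) (Fin.castAdd m) i)) := by
    funext x j
    induction j using Fin.addCases <;> simp [parL, parR]
  rw [heq]
  exact fnnComputable_comp (fnnComputable_comp (coord_computable _) (parR_computable hf))
    (coord_computable _)

lemma fanout_computable {m n1 n2 : ℕ} {f1 : (Fin m → ℝ) → (Fin n1 → ℝ)}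
    {f2 : (Fin m → ℝ) → (Fin n2 → ℝ)} (h1 : FNNComputable f1) (h2 : FNNComputable f2) :
    FNNComputable (fun x => cat (f1 x) (f2 x)) := by
  have heq : (fun x : Fin m → ℝ => cat (f1 x) (f2 x))
      = parL n1 f2 ∘ parR m f1
        ∘ (fun x : Fin m → ℝ => fun j : Fin (m + m) => x (Fin.addCases id id j)) := by
    funext x j
    induction j using Fin.addCases <;> simp [parL, parR]
  rw [heq]
  exact fnnComputable_comp
    (fnnComputable_comp (coord_computable _) (parR_computable h1)) (parL_computable h2)

end Par

section GC

variable {α β γ : Type}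

/-- `GC f`: `f`, a map between real vector spaces indexed by finite types, is
computed by an FNN after arbitrary encodings of the index types into `Fin`. -/
def GC [Fintype α] [Fintype β] (f : (α → ℝ) → (β → ℝ)) : Prop :=
  ∀ (a b : ℕ) (ea : α ≃ Fin a) (eb : β ≃ Fin b),
    ∃ F : (Fin a → ℝ) → (Fin b → ℝ), FNNComputable F ∧
      ∀ z : α → ℝ, F (z ∘ ea.symm) = f z ∘ eb.symm

lemma GC_of [Fintype α] [Fintype β] {f : (α → ℝ) → (β → ℝ)} {a0 b0 : ℕ}
    (ea0 : α ≃ Fin a0) (eb0 : β ≃ Fin b0) (F0 : (Fin a0 → ℝ) → (Fin b0 → ℝ))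
    (hF0 : FNNComputable F0)
    (h : ∀ z, F0 (z ∘ ea0.symm) = f z ∘ eb0.symm) : GC f := by
  intro a b ea eb
  refine ⟨(fun w => fun j => w (eb0 (eb.symm j))) ∘ F0
      ∘ (fun w => fun i0 => w (ea (ea0.symm i0))), ?_, ?_⟩
  · exact fnnComputable_comp (fnnComputable_comp (coord_computable _) hF0)
      (coord_computable _)
  · intro z
    funext j
    show F0 (fun i0 => (z ∘ ea.symm) (ea (ea0.symm i0))) (eb0 (eb.symm j)) = f z (eb.symm j)
    have h1 : (fun i0 => (z ∘ ea.symm) (ea (ea0.symm i0))) = z ∘ ea0.symm := by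
      funext i0; simp
    rw [h1, h z]
    simp

lemma GC_comp [Fintype α] [Fintype β] [Fintype γ] {f : (α → ℝ) → (β → ℝ)}
    {g : (β → ℝ) → (γ → ℝ)} (hf : GC f) (hg : GC g) : GC (fun z => g (f z)) := by
  intro a c ea ec
  obtain ⟨F, hF, hFe⟩ := hf _ _ ea (Fintype.equivFin β)
  obtain ⟨G, hG, hGe⟩ := hg _ _ (Fintype.equivFin β) ec
  refine ⟨G ∘ F, fnnComputable_comp hF hG, fun z => ?_⟩
  show G (F (z ∘ ea.symm)) = _
  rw [hFe z, hGe (f z)]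

lemma GC_affine [Fintype α] [Fintype β] {f : (α → ℝ) → (β → ℝ)} (M : β → α → ℝ)
    (bv : β → ℝ) (h : ∀ z j, f z j = (∑ q, M j q * z q) + bv j) : GC f := by
  intro a b ea eb
  refine ⟨fun x j' => (∑ i, M (eb.symm j') (ea.symm i) * x i) + bv (eb.symm j'), ?_, ?_⟩
  · exact affine_computable (fun j' i => M (eb.symm j') (ea.symm i))
      (fun j' => bv (eb.symm j'))
      (fun x => by funext j'; simp [Matrix.mulVec, dotProduct])
  · intro z
    funext j'
    show (∑ i, M (eb.symm j') (ea.symm i) * z (ea.symm i)) + bv _ = f z (eb.symm j')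
    rw [h]
    congr 1
    exact Equiv.sum_comp ea.symm (fun q => M (eb.symm j') q * z q)

lemma GC_coord [Fintype α] [Fintype β] [DecidableEq α] (σ : β → α) :
    GC (fun z : α → ℝ => fun j => z (σ j)) := by
  apply GC_affine (fun j q => if q = σ j then 1 else 0) 0
  intro z j
  simp [ite_mul, Finset.sum_ite_eq']

lemma GC_maxpool [Fintype α] [Fintype β] {f : (α → ℝ) → (β → ℝ)} (P : β → Finset α)
    (hP : ∀ j, (P j).Nonempty) (h : ∀ z j, f z j = (P j).sup' (hP j) z) : GC f := by
  intro a b ea eb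
  refine ⟨fun x j' => ((P (eb.symm j')).image ea).sup' ((hP _).image ea) x, ?_, ?_⟩
  · exact layer_computable ⟨.maxpool, fun j' => (P (eb.symm j')).image ea,
      fun j' => (hP _).image ea, fun _ _ => rfl⟩
  · intro z
    funext j'
    show ((P (eb.symm j')).image ea).sup' _ (z ∘ ea.symm) = f z (eb.symm j')
    rw [h, Finset.sup'_image]
    apply Finset.sup'_congr _ rfl
    intro q hq
    simp

lemma GC_reindex_out [Fintype α] [Fintype β] {β' : Type} [Fintype β']
    {f : (α → ℝ) → (β → ℝ)} (e : β' ≃ β) (hf : GC f) : GC (fun z => f z ∘ e) := by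
  intro a b' ea eb'
  obtain ⟨F, hF, hFe⟩ := hf _ _ ea (e.symm.trans eb')
  refine ⟨F, hF, fun z => ?_⟩
  funext j
  rw [hFe z]
  show f z ((e.symm.trans eb').symm j) = f z (e (eb'.symm j))
  simp

lemma GC_of_fnn {m n : ℕ} {f : (Fin m → ℝ) → (Fin n → ℝ)} (hf : FNNComputable f) :
    GC f :=
  GC_of (Equiv.refl _) (Equiv.refl _) f hf (fun _ => rfl)

lemma GC_pair [Fintype α] [Fintype β] [Fintype γ] {f1 : (α → ℝ) → (β → ℝ)}
    {f2 : (α → ℝ) → (γ → ℝ)} (h1 : GC f1) (h2 : GC f2) :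
    GC (fun z => Sum.elim (f1 z) (f2 z)) := by
  obtain ⟨F1, hF1, he1⟩ := h1 _ _ (Fintype.equivFin α) (Fintype.equivFin β)
  obtain ⟨F2, hF2, he2⟩ := h2 _ _ (Fintype.equivFin α) (Fintype.equivFin γ)
  apply GC_of (Fintype.equivFin α)
    (((Fintype.equivFin β).sumCongr (Fintype.equivFin γ)).trans finSumFinEquiv)
    (fun x => cat (F1 x) (F2 x)) (fanout_computable hF1 hF2)
  intro z
  funext j
  induction j using Fin.addCases with
  | left j1 =>
    simp only [cat_castAdd, he1 z, Function.comp_apply, Function.comp,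
      Equiv.symm_trans_apply, finSumFinEquiv_symm_apply_castAdd,
      Equiv.sumCongr_symm, Equiv.sumCongr_apply, Sum.map_inl, Sum.elim_inl]
  | right j2 =>
    simp only [cat_natAdd, he2 z, Function.comp_apply, Function.comp,
      Equiv.symm_trans_apply, finSumFinEquiv_symm_apply_natAdd,
      Equiv.sumCongr_symm, Equiv.sumCongr_apply, Sum.map_inr, Sum.elim_inr]

/-- Splitting off the last index of `Fin (n+1) × γ`. -/
def prodSplit (n : ℕ) (γ : Type) : (Fin (n + 1) × γ) ≃ ((Fin n × γ) ⊕ γ) where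
  toFun q := Fin.lastCases (motive := fun _ => (Fin n × γ) ⊕ γ)
    (Sum.inr q.2) (fun j => Sum.inl (j, q.2)) q.1
  invFun := Sum.elim (fun jc => (jc.1.castSucc, jc.2)) (fun c => (Fin.last n, c))
  left_inv := by
    rintro ⟨j, c⟩
    induction j using Fin.lastCases with
    | last => simp
    | cast j => simp
  right_inv := by
    rintro (⟨j, c⟩ | c) <;> simp

lemma GC_prodFin [Fintype α] :
    ∀ (n : ℕ) {γ : Type} [Fintype γ] (f : (α → ℝ) → (Fin n × γ → ℝ)),
      (∀ i : Fin n, GC (fun z => fun c => f z (i, c))) → GC f := by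
  intro n
  induction n with
  | zero =>
    intro γ _ f _
    apply GC_affine (fun _ _ => 0) (fun _ => 0)
    intro z j
    exact j.1.elim0
  | succ n ih =>
    intro γ _ f hf
    have hmain : GC (fun z => Sum.elim
        (fun jc : Fin n × γ => f z (jc.1.castSucc, jc.2)) (fun c => f z (Fin.last n, c))) := by
      apply GC_pair
      · exact ih _ (fun i => hf i.castSucc)
      · exact hf (Fin.last n)
    have heq : f = fun z => (Sum.elim
        (fun jc : Fin n × γ => f z (jc.1.castSucc, jc.2)) (fun c => f z (Fin.last n, c)))
        ∘ (prodSplit n γ) := by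
      funext z q
      obtain ⟨j, c⟩ := q
      induction j using Fin.lastCases <;> simp [prodSplit]
    rw [heq]
    exact GC_reindex_out (prodSplit n γ) hmain

lemma GC_prod [Fintype α] {ι γ : Type} [Fintype ι] [Fintype γ]
    (f : (α → ℝ) → (ι × γ → ℝ)) (hf : ∀ i, GC (fun z => fun c => f z (i, c))) : GC f := by
  have h2 : GC (fun z => fun q : Fin (Fintype.card ι) × γ =>
      f z ((Fintype.equivFin ι).symm q.1, q.2)) :=
    GC_prodFin _ _ (fun i => hf ((Fintype.equivFin ι).symm i))
  have heq : f = fun z => (fun q : Fin (Fintype.card ι) × γ =>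
      f z ((Fintype.equivFin ι).symm q.1, q.2))
      ∘ ((Fintype.equivFin ι).prodCongr (Equiv.refl γ)) := by
    funext z q
    simp [Equiv.prodCongr]
  rw [heq]
  exact GC_reindex_out _ h2

end GC

section Assemble

lemma comp_addCases {a b : ℕ} {γ : Type} (z : γ → ℝ) (f : Fin a → γ) (g : Fin b → γ) :
    (fun j => z (Fin.addCases (motive := fun _ => γ) f g j))
      = cat (fun i => z (f i)) (fun i => z (g i)) := by
  funext j
  induction j using Fin.addCases with
  | left i => rw [Fin.addCases_left, cat_castAdd]
  | right i => rw [Fin.addCases_right, cat_natAdd]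

lemma cat_eq_elim {a b : ℕ} (u : Fin a → ℝ) (v : Fin b → ℝ) :
    cat u v = Sum.elim u v ∘ finSumFinEquiv.symm := by
  funext j
  induction j using Fin.addCases with
  | left i =>
    rw [cat_castAdd, Function.comp_apply, finSumFinEquiv_symm_apply_castAdd, Sum.elim_inl]
  | right i =>
    rw [cat_natAdd, Function.comp_apply, finSumFinEquiv_symm_apply_natAdd, Sum.elim_inr]

end Assemble


set_option maxHeartbeats 1000000 in
/-- **A GNN on a fixed structure is reducible to an FNN (Theorem 1).**
Fix a finite directed graph structure `(V, E)` in which every node has an incoming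
edge, and let the GNN be the composition of `k` message-passing layers with
FNN-computable message and update functions and mean/max/sum aggregations.
Then there exists a feed-forward neural network `F` such that for all node features
`x` and edge features `eF`, the output of the GNN on the structure with these features
equals `F` applied to the concatenation (via the bijective encoding `eIn`) of the node
and edge features. -/
theorem gnn_on_fixed_structure_reducible_to_fnn
    (V : Type) [Fintype V] [DecidableEq V]
    (E : Finset (V × V))
    (hE : ∀ i : V, (E.filter fun p => p.2 = i).Nonempty)
    (k : ℕ) (DE : ℕ) (d D' : ℕ → ℕ)
    (fmsg : (t : ℕ) → (Fin (d t + d t + DE) → ℝ) → (Fin (D' t) → ℝ))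
    (fupd : (t : ℕ) → (Fin (d t + D' t) → ℝ) → (Fin (d (t + 1)) → ℝ))
    (K : ℕ → AggKind)
    (hmsg : ∀ t, t < k → FNNComputable (fmsg t))
    (hupd : ∀ t, t < k → FNNComputable (fupd t))
    (mIn mOut : ℕ)
    (eIn : ((V × Fin (d 0)) ⊕ ({p : V × V // p ∈ E} × Fin DE)) ≃ Fin mIn)
    (eOut : (V × Fin (d k)) ≃ Fin mOut) :
    ∃ F : (Fin mIn → ℝ) → (Fin mOut → ℝ),
      FNNComputable F ∧
      ∀ (x : V → Fin (d 0) → ℝ) (eF : {p : V × V // p ∈ E} → Fin DE → ℝ),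
        F (fun q => Sum.elim (fun a => x a.1 a.2) (fun b => eF b.1 b.2) (eIn.symm q)) =
          fun j => gnnForward E hE d D' fmsg fupd K x eF k (eOut.symm j).1 (eOut.symm j).2 := by
  -- the index type of the "state" vector entering layer `t`
  let At : ℕ → Type := fun t => (V × Fin (d t)) ⊕ ({p : V × V // p ∈ E} × Fin DE)
  -- extracting node and edge features from a state vector
  let X : ∀ t, (At t → ℝ) → V → Fin (d t) → ℝ := fun _ z i c => z (Sum.inl (i, c))
  let EFof : ∀ t, (At t → ℝ) → {p : V × V // p ∈ E} → Fin DE → ℝ :=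
    fun _ z p c => z (Sum.inr (p, c))
  -- a single message-passing layer as a state transformation
  let Step : ∀ t, (At t → ℝ) → (At (t + 1) → ℝ) := fun t w =>
    Sum.elim (fun a => mpLayer E hE (fmsg t) (fupd t) (K t) (X t w) (EFof t w) a.1 a.2)
      (fun b => w (Sum.inr b))
  have hstep : ∀ t, t < k → GC (Step t) := by
    intro t ht
    have hnode : ∀ i : V, GC (fun w : At t → ℝ =>
        mpLayer E hE (fmsg t) (fupd t) (K t) (X t w) (EFof t w) i) := by
      intro i
      letI : Fintype {p : V × V // p ∈ E.filter fun p => p.2 = i} := Finset.Subtype.fintype _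
      have hsne : ((E.filter fun p => p.2 = i).attach).Nonempty :=
        Finset.attach_nonempty_iff.mpr (hE i)
      -- coordinates of the input of the message function for edge p
      set σp : {p : V × V // p ∈ E.filter fun p => p.2 = i} → Fin (d t + d t + DE) → At t :=
        fun p => Fin.addCases (motive := fun _ => At t)
          (Fin.addCases (motive := fun _ => At t)
            (fun c => Sum.inl (p.1.1, c)) (fun c => Sum.inl (i, c)))
          (fun c => Sum.inr (⟨p.1, (Finset.mem_filter.mp p.2).1⟩, c)) with hσp
      -- the tuple of all incoming messages
      have hmsgT : GC (fun w : At t → ℝ =>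
          fun q : {p : V × V // p ∈ E.filter fun p => p.2 = i} × Fin (D' t) =>
            fmsg t (fun j => w (σp q.1 j)) q.2) := by
        apply GC_prod
        intro p
        exact GC_comp (GC_coord (σp p)) (GC_of_fnn (hmsg t ht))
      -- the aggregation, as a function of the message tuple
      have hagg : GC (fun u : ({p : V × V // p ∈ E.filter fun p => p.2 = i} × Fin (D' t)) → ℝ =>
          aggregate (K t) (E.filter fun p => p.2 = i).attach hsne
            (fun p => fun c => u (p, c))) := by
        cases hK : K t with
        | sum =>
          apply GC_affine (fun c q => if q.2 = c then 1 else 0) 0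
          intro u c
          show (∑ p ∈ (E.filter fun p => p.2 = i).attach, u (p, c)) = _
          simp only [Pi.zero_apply, add_zero, ite_mul, one_mul, zero_mul,
            Fintype.sum_prod_type, Finset.sum_ite_eq', Finset.mem_univ, if_true,
            Finset.attach_eq_univ]
        | mean =>
          apply GC_affine
            (fun c q => if q.2 = c
              then ((((E.filter fun p => p.2 = i).attach).card : ℝ))⁻¹ else 0) 0
          intro u c
          show (∑ p ∈ (E.filter fun p => p.2 = i).attach, u (p, c))
              / (((E.filter fun p => p.2 = i).attach).card : ℝ) = _
          simp only [Pi.zero_apply, add_zero, ite_mul, one_mul, zero_mul,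
            Fintype.sum_prod_type, Finset.sum_ite_eq', Finset.mem_univ, if_true,
            Finset.attach_eq_univ, ← Finset.mul_sum]
          rw [div_eq_mul_inv, mul_comm]
        | max =>
          apply GC_maxpool
            (fun c => ((E.filter fun p => p.2 = i).attach).image (fun p => (p, c)))
            (fun c => hsne.image _)
          intro u c
          show ((E.filter fun p => p.2 = i).attach).sup' hsne (fun p => u (p, c)) = _
          rw [Finset.sup'_image]
          rfl
      -- the input of the update function
      have hcat : GC (fun w : At t → ℝ =>
          Sum.elim (fun c : Fin (d t) => w (Sum.inl (i, c)))
            (aggregate (K t) (E.filter fun p => p.2 = i).attach hsne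
              (fun p => fmsg t (fun j => w (σp p j))))) :=
        GC_pair (GC_coord (fun c : Fin (d t) => Sum.inl (i, c))) (GC_comp hmsgT hagg)
      have hcat' : GC (fun w : At t → ℝ =>
          (Sum.elim (fun c : Fin (d t) => w (Sum.inl (i, c)))
            (aggregate (K t) (E.filter fun p => p.2 = i).attach hsne
              (fun p => fmsg t (fun j => w (σp p j))))) ∘ finSumFinEquiv.symm) :=
        GC_reindex_out finSumFinEquiv.symm hcat
      have hfull := GC_comp hcat' (GC_of_fnn (hupd t ht))
      have heq : (fun w : At t → ℝ =>
          mpLayer E hE (fmsg t) (fupd t) (K t) (X t w) (EFof t w) i)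
          = fun w : At t → ℝ => fupd t
            ((Sum.elim (fun c : Fin (d t) => w (Sum.inl (i, c)))
              (aggregate (K t) (E.filter fun p => p.2 = i).attach hsne
                (fun p => fmsg t (fun j => w (σp p j))))) ∘ finSumFinEquiv.symm) := by
        have harg : ∀ w : At t → ℝ,
            (fun (p : {p : V × V // p ∈ E.filter fun p => p.2 = i}) =>
              fmsg t (fun j => w (σp p j)))
            = fun p => fmsg t (cat (cat (X t w p.1.1) (X t w i))
                (EFof t w ⟨p.1, (Finset.mem_filter.mp p.2).1⟩)) := by
          intro w
          funext p
          have hinner : (fun j => w (σp p j))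
              = cat (cat (X t w p.1.1) (X t w i))
                  (EFof t w ⟨p.1, (Finset.mem_filter.mp p.2).1⟩) := by
            simp only [hσp]
            rw [comp_addCases, comp_addCases]
          rw [hinner]
        funext w
        rw [← cat_eq_elim]
        show mpLayer E hE (fmsg t) (fupd t) (K t) (X t w) (EFof t w) i = _
        rw [mpLayer, harg w]
      rw [heq]
      exact hfull
    -- combine nodes and the (unchanged) edge features
    have hpair : GC (fun w : At t → ℝ => Sum.elim
        (fun a : V × Fin (d (t + 1)) =>
          mpLayer E hE (fmsg t) (fupd t) (K t) (X t w) (EFof t w) a.1 a.2)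
        (fun b : {p : V × V // p ∈ E} × Fin DE => w (Sum.inr b))) := by
      apply GC_pair
      · exact GC_prod _ (fun i => hnode i)
      · exact GC_coord (Sum.inr : {p : V × V // p ∈ E} × Fin DE → At t)
    exact hpair
  -- the state after t layers, as a function of the initial state
  let StateF : ∀ t, (At 0 → ℝ) → (At t → ℝ) := fun t z =>
    Sum.elim (fun a => gnnForward E hE d D' fmsg fupd K (X 0 z) (EFof 0 z) t a.1 a.2)
      (fun b => z (Sum.inr b))
  have hstate : ∀ t, t ≤ k → GC (StateF t) := by
    intro t
    induction t with
    | zero =>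
      intro _
      have heq : StateF 0 = fun z => fun q => z q := by
        funext z q
        rcases q with ⟨i, c⟩ | b <;> rfl
      rw [heq]
      exact GC_coord (fun q : At 0 => q)
    | succ t ih =>
      intro hlt
      have ht : t < k := Nat.lt_of_succ_le hlt
      have heq : StateF (t + 1) = fun z => Step t (StateF t z) := by
        funext z q
        rcases q with ⟨i, c⟩ | b <;> rfl
      rw [heq]
      exact GC_comp (ih ht.le) (hstep t ht)
  have hfinal : GC (fun z : At 0 → ℝ => fun a : V × Fin (d k) =>
      gnnForward E hE d D' fmsg fupd K (X 0 z) (EFof 0 z) k a.1 a.2) :=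
    GC_comp (hstate k le_rfl) (GC_coord (Sum.inl : V × Fin (d k) → At k))
  obtain ⟨F, hF, hFe⟩ := hfinal _ _ eIn eOut
  refine ⟨F, hF, ?_⟩
  intro x eF
  exact hFe (Sum.elim (fun a => x a.1 a.2) (fun b => eF b.1 b.2))
end

section
/- Let N be a nonempty finite index set, let C > 0 be real, let p : N → ℝ satisfy 0 < p(j) < C for all j ∈ N, and let s, t : N → ℝ take values in {0, 1}. Let A = {j ∈ N : s(j) = 1 and t(j) = 0}. Then max(0, max_{j ∈ N} (p(j) − C·(1 − s(j) + t(j)))) equals max_{j ∈ A} p(j) if A is nonempty, and equals 0 if A is empty. -/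
open scoped Classical

/-!
Off `A` the penalty factor `1 - s j + t j` is at least `1`, so the penalized score
`p j - C * (1 - s j + t j)` is at most `p j - C < 0`; on `A` the factor vanishes and the
score is `p j > 0`. Hence the maximum over `N` is attained on `A` when `A` is nonempty,
and is negative (so clipped to `0` by the ReLU) when `A` is empty.
-/

namespace Finset

variable {ι α : Type*} [LinearOrder α]

theorem sup'_eq_sup'_filter_of_le {N : Finset ι} (hN : N.Nonempty) {P : ι → Prop}
    [DecidablePred P] (hA : (N.filter P).Nonempty) {f g : ι → α}
    (hfg : ∀ j ∈ N, P j → f j = g j) (hle : ∀ j ∈ N, ¬P j → f j ≤ (N.filter P).sup' hA g) :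
    N.sup' hN f = (N.filter P).sup' hA g := by
  apply le_antisymm
  · refine sup'_le _ _ fun j hj => ?_
    by_cases hPj : P j
    · exact hfg j hj hPj ▸ le_sup' g (mem_filter.2 ⟨hj, hPj⟩)
    · exact hle j hj hPj
  · refine sup'_le _ _ fun j hj => ?_
    obtain ⟨hjN, hPj⟩ := mem_filter.1 hj
    exact hfg j hjN hPj ▸ le_sup' f hjN

end Finset

open Finset

theorem one_le_one_sub_add_of_not {s t : ℝ} (hs : s = 0 ∨ s = 1) (ht : t = 0 ∨ t = 1)
    (h : ¬(s = 1 ∧ t = 0)) : 1 ≤ 1 - s + t := by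
  rcases hs with rfl | rfl <;> rcases ht with rfl | rfl <;> norm_num at *

theorem sub_mul_one_sub_add_neg {p C s t : ℝ} (hC : 0 ≤ C) (hpC : p < C)
    (hs : s = 0 ∨ s = 1) (ht : t = 0 ∨ t = 1) (h : ¬(s = 1 ∧ t = 0)) :
    p - C * (1 - s + t) < 0 := by
  have hC_le : C ≤ C * (1 - s + t) :=
    le_mul_of_one_le_right hC (one_le_one_sub_add_of_not hs ht h)
  linarith

/-- **The DFS highest-priority-unvisited-neighbor computation `lfu`.**
Let `N` be a nonempty finite index set, `C > 0`, let `p : N → ℝ` satisfy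
`0 < p j < C` on `N`, and let `s, t : N → ℝ` take values in `{0, 1}`.
Let `A = {j ∈ N : s j = 1 ∧ t j = 0}`. Then
`max 0 (max_{j ∈ N} (p j − C·(1 − s j + t j)))` equals `max_{j ∈ A} p j`
if `A` is nonempty, and equals `0` if `A` is empty. -/
theorem dfs_lfu_spec
    (ι : Type) (N : Finset ι) (hN : N.Nonempty)
    (C : ℝ) (hC : 0 < C)
    (p : ι → ℝ) (hp : ∀ j ∈ N, 0 < p j ∧ p j < C)
    (s t : ι → ℝ)
    (hs : ∀ j ∈ N, s j = 0 ∨ s j = 1) (ht : ∀ j ∈ N, t j = 0 ∨ t j = 1) :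
    (∀ hA : (N.filter fun j => s j = 1 ∧ t j = 0).Nonempty,
      max 0 (N.sup' hN fun j => p j - C * (1 - s j + t j)) =
        (N.filter fun j => s j = 1 ∧ t j = 0).sup' hA p) ∧
    ((N.filter fun j => s j = 1 ∧ t j = 0) = ∅ →
      max 0 (N.sup' hN fun j => p j - C * (1 - s j + t j)) = 0) := by
  have h_on_A : ∀ j ∈ N, s j = 1 ∧ t j = 0 → p j - C * (1 - s j + t j) = p j := by
    rintro j - ⟨hs1, ht0⟩
    simp [hs1, ht0]
  have h_off_A : ∀ j ∈ N, ¬(s j = 1 ∧ t j = 0) → p j - C * (1 - s j + t j) < 0 :=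
    fun j hj => sub_mul_one_sub_add_neg hC.le (hp j hj).2 (hs j hj) (ht j hj)
  refine ⟨fun hA => ?_, fun hA => ?_⟩
  · have hA_pos : 0 < (N.filter fun j => s j = 1 ∧ t j = 0).sup' hA p := by
      obtain ⟨j, hj⟩ := hA
      exact (hp j (mem_filter.1 hj).1).1.trans_le (le_sup' p hj)
    rw [sup'_eq_sup'_filter_of_le hN hA h_on_A
      fun j hj hjA => (h_off_A j hj hjA).le.trans hA_pos.le, max_eq_right hA_pos.le]
  · exact max_eq_left ((sup'_lt_iff hN).2
      fun j hj => h_off_A j hj (filter_eq_empty_iff.1 hA hj)).le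
end

section
/- For the DFS reference GNN next-state computation: for every node i with nonempty forward-neighbor set N_f(i), every assignment of one-hot states (s_{j,0}, s_{j,1}, s_{j,2}) ∈ {(1,0,0),(0,1,0),(0,0,1)} and target flags t_j ∈ {0,1} to the nodes, and every real C ≥ 1: (a) if t_i = 0 then (s'_{i,0}, s'_{i,1}, s'_{i,2}) = (s_{i,0}, s_{i,1}, s_{i,2}); (b) if t_i = 1 and there exists j ∈ N_f(i) with s_{j,0} = 1 and t_j = 0, then (s'_{i,0}, s'_{i,1}, s'_{i,2}) = (0, 1, 0); (c) if t_i = 1 and no such j exists, then (s'_{i,0}, s'_{i,1}, s'_{i,2}) = (0, 0, 1). In particular, the output is always a one-hot vector and agrees with the DFS next-state rule (a non-target node keeps its state; the target node becomes under-visiting if it has an unvisited non-target forward neighbor, and visited otherwise). -/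
/-- First component of the DFS reference GNN next state:
`s'_{i,0} = ReLU (s_{i,0} − C·t_i)`. -/
noncomputable def dfsS0 (C si0 ti : ℝ) : ℝ := max 0 (si0 - C * ti)

/-- Second component of the DFS reference GNN next state:
`s'_{i,1} = ReLU (1 − C·((1 − t_i) + min_{j ∈ N_f(i)} ReLU (1 − s_{j,0} + t_j)))
            + ReLU (s_{i,1} − C·t_i)`. -/
noncomputable def dfsS1 {ι : Type} (Nf : Finset ι) (hNf : Nf.Nonempty) (C : ℝ)
    (s0 t : ι → ℝ) (si1 ti : ℝ) : ℝ :=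
  max 0 (1 - C * ((1 - ti) + Nf.inf' hNf fun j => max 0 (1 - s0 j + t j))) +
    max 0 (si1 - C * ti)

/-- Third component of the DFS reference GNN next state: `s'_{i,2} = 1 − s'_{i,0} − s'_{i,1}`. -/
noncomputable def dfsS2 {ι : Type} (Nf : Finset ι) (hNf : Nf.Nonempty) (C : ℝ)
    (s0 t : ι → ℝ) (si0 si1 ti : ℝ) : ℝ :=
  1 - dfsS0 C si0 ti - dfsS1 Nf hNf C s0 t si1 ti

/-- **Correctness of the DFS reference GNN next-state computation.**
For every node `i` with nonempty forward-neighbor set `Nf`, every assignment of one-hot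
states `(s_{j,0}, s_{j,1}, s_{j,2}) ∈ {(1,0,0), (0,1,0), (0,0,1)}` and target flags
`t_j ∈ {0, 1}` to the nodes, and every real `C ≥ 1`:
(a) if `t_i = 0` then `(s'_{i,0}, s'_{i,1}, s'_{i,2}) = (s_{i,0}, s_{i,1}, s_{i,2})`;
(b) if `t_i = 1` and some `j ∈ Nf` has `s_{j,0} = 1` and `t_j = 0`, then
    `(s'_{i,0}, s'_{i,1}, s'_{i,2}) = (0, 1, 0)`;
(c) if `t_i = 1` and no such `j` exists, then
    `(s'_{i,0}, s'_{i,1}, s'_{i,2}) = (0, 0, 1)`.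
In particular the output is always one-hot and agrees with the DFS next-state rule. -/
theorem dfs_next_state_spec
    (ι : Type) (i : ι) (Nf : Finset ι) (hNf : Nf.Nonempty)
    (s0 s1 s2 t : ι → ℝ)
    (honehot : ∀ j : ι,
      (s0 j = 1 ∧ s1 j = 0 ∧ s2 j = 0) ∨
      (s0 j = 0 ∧ s1 j = 1 ∧ s2 j = 0) ∨
      (s0 j = 0 ∧ s1 j = 0 ∧ s2 j = 1))
    (ht : ∀ j : ι, t j = 0 ∨ t j = 1)
    (C : ℝ) (hC : 1 ≤ C) :
    (t i = 0 →
      dfsS0 C (s0 i) (t i) = s0 i ∧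
      dfsS1 Nf hNf C s0 t (s1 i) (t i) = s1 i ∧
      dfsS2 Nf hNf C s0 t (s0 i) (s1 i) (t i) = s2 i) ∧
    (t i = 1 → (∃ j ∈ Nf, s0 j = 1 ∧ t j = 0) →
      dfsS0 C (s0 i) (t i) = 0 ∧
      dfsS1 Nf hNf C s0 t (s1 i) (t i) = 1 ∧
      dfsS2 Nf hNf C s0 t (s0 i) (s1 i) (t i) = 0) ∧
    (t i = 1 → (∀ j ∈ Nf, ¬(s0 j = 1 ∧ t j = 0)) →
      dfsS0 C (s0 i) (t i) = 0 ∧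
      dfsS1 Nf hNf C s0 t (s1 i) (t i) = 0 ∧
      dfsS2 Nf hNf C s0 t (s0 i) (s1 i) (t i) = 1) := by
  set m := Nf.inf' hNf fun j => max 0 (1 - s0 j + t j) with hm
  have hm0 : 0 ≤ m := Finset.le_inf' hNf _ fun j _ => le_max_left _ _
  have hs0i : s0 i = 0 ∨ s0 i = 1 := by
    rcases honehot i with ⟨h, _, _⟩ | ⟨h, _, _⟩ | ⟨h, _, _⟩ <;> simp [h]
  have hs1i : s1 i = 0 ∨ s1 i = 1 := by
    rcases honehot i with ⟨_, h, _⟩ | ⟨_, h, _⟩ | ⟨_, h, _⟩ <;> simp [h]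
  have hsum : s0 i + s1 i + s2 i = 1 := by
    rcases honehot i with ⟨h0, h1, h2⟩ | ⟨h0, h1, h2⟩ | ⟨h0, h1, h2⟩ <;>
      rw [h0, h1, h2] <;> ring
  refine ⟨?_, ?_, ?_⟩
  · intro hti
    have h0 : dfsS0 C (s0 i) (t i) = s0 i := by
      rcases hs0i with h | h <;> simp [dfsS0, hti, h]
    have h1 : dfsS1 Nf hNf C s0 t (s1 i) (t i) = s1 i := by
      have hle : (0:ℝ) ⊔ (1 - C * ((1 - t i) + m)) = 0 := by
        apply max_eq_left; rw [hti]; nlinarith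
      have h2 : (0:ℝ) ⊔ (s1 i - C * t i) = s1 i := by
        rcases hs1i with h | h <;> rw [h, hti] <;> simp
      rw [dfsS1, ← hm, hle, h2]; ring
    refine ⟨h0, h1, ?_⟩
    rw [dfsS2, h0, h1]; linarith
  · intro hti ⟨j, hj, hsj, htj⟩
    have h0 : dfsS0 C (s0 i) (t i) = 0 := by
      rcases hs0i with h | h <;> simp [dfsS0, hti, h] <;> linarith
    have hmz : m = 0 := by
      have : m ≤ max 0 (1 - s0 j + t j) := Finset.inf'_le _ hj
      rw [hsj, htj] at this
      simp at this
      linarith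
    have h1 : dfsS1 Nf hNf C s0 t (s1 i) (t i) = 1 := by
      have h2 : (0:ℝ) ⊔ (s1 i - C * t i) = 0 := by
        apply max_eq_left; rcases hs1i with h | h <;> rw [h, hti] <;> linarith
      have h3 : (0:ℝ) ⊔ (1 - C * ((1 - t i) + m)) = 1 := by
        rw [hti, hmz]; norm_num
      rw [dfsS1, ← hm, h3, h2]; ring
    refine ⟨h0, h1, ?_⟩
    rw [dfsS2, h0, h1]; ring
  · intro hti hno
    have h0 : dfsS0 C (s0 i) (t i) = 0 := by
      rcases hs0i with h | h <;> simp [dfsS0, hti, h] <;> linarith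
    have hm1 : 1 ≤ m := by
      apply Finset.le_inf' hNf
      intro j hj
      have := hno j hj
      have hs : s0 j = 0 ∨ s0 j = 1 := by
        rcases honehot j with ⟨h, _, _⟩ | ⟨h, _, _⟩ | ⟨h, _, _⟩ <;> simp [h]
      rcases hs with h | h <;> rcases ht j with h' | h' <;>
        simp [h, h'] at this ⊢ <;> linarith
    have h1 : dfsS1 Nf hNf C s0 t (s1 i) (t i) = 0 := by
      have hle : 1 - C * ((1 - t i) + m) ≤ 0 := by
        rw [hti]; nlinarith
      have h2 : s1 i - C * t i ≤ 0 := by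
        rcases hs1i with h | h <;> rw [h, hti] <;> linarith
      simp [dfsS1, ← hm, max_eq_left hle, max_eq_left h2]
    refine ⟨h0, h1, ?_⟩
    rw [dfsS2, h0, h1]; ring
end

section
/- For the DFS reference GNN next-target computation: for every node i with nonempty backward-neighbor set N_b(i) and nonempty forward-neighbor set N_f(i), every real C ≥ 1, every assignment of target flags t_j ∈ {0,1}, and arbitrary real values p_i, lfu_j, lbu_j, if t_i = 1 then t'_i = 0; that is, the reference DFS GNN satisfies the ground-truth property that the current target node is never predicted as the next target. -/
/-- The DFS reference GNN next-target computation for node `i`: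
`t'_i = ReLU (max_{j ∈ N_b(i)} (1 − C·(1 − t_j + ReLU (lfu_j − p_i) + ReLU (p_i − lfu_j)) − C·t_i))`
`     + ReLU (max_{j ∈ N_f(i)} (1 − C·(1 − t_j + ReLU (lbu_j − p_i) + ReLU (p_i − lbu_j)) − C·t_i))`. -/
noncomputable def dfsNextTarget {ι : Type} (Nb Nf : Finset ι)
    (hNb : Nb.Nonempty) (hNf : Nf.Nonempty)
    (C : ℝ) (t p lfu lbu : ι → ℝ) (i : ι) : ℝ :=
  max 0 (Nb.sup' hNb fun j =>
      1 - C * (1 - t j + max 0 (lfu j - p i) + max 0 (p i - lfu j)) - C * t i) +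
    max 0 (Nf.sup' hNf fun j =>
      1 - C * (1 - t j + max 0 (lbu j - p i) + max 0 (p i - lbu j)) - C * t i)

/-- **The current target is never the next target (DFS reference GNN).**
For every node `i` with nonempty backward-neighbor set `N_b(i)` and nonempty
forward-neighbor set `N_f(i)`, every real `C ≥ 1`, every assignment of target flags
`t_j ∈ {0, 1}`, and arbitrary real values `p`, `lfu`, `lbu`:
if `t_i = 1` then `t'_i = 0`. -/
theorem dfs_current_target_not_next_target
    (ι : Type) (i : ι) (Nb Nf : Finset ι)
    (hNb : Nb.Nonempty) (hNf : Nf.Nonempty)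
    (C : ℝ) (hC : 1 ≤ C)
    (t : ι → ℝ) (ht : ∀ j : ι, t j = 0 ∨ t j = 1)
    (p lfu lbu : ι → ℝ)
    (hti : t i = 1) :
    dfsNextTarget Nb Nf hNb hNf C t p lfu lbu i = 0 := by
  have key : ∀ (q : ι → ℝ) (j : ι),
      1 - C * (1 - t j + max 0 (q j - p i) + max 0 (p i - q j)) - C * t i ≤ 0 := by
    intro q j
    have h1 : (0:ℝ) ≤ 1 - t j := by rcases ht j with h | h <;> simp [h]
    have h2 : (0:ℝ) ≤ max 0 (q j - p i) := le_max_left _ _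
    have h3 : (0:ℝ) ≤ max 0 (p i - q j) := le_max_left _ _
    have hC0 : (0:ℝ) ≤ C := by linarith
    have : (0:ℝ) ≤ C * (1 - t j + max 0 (q j - p i) + max 0 (p i - q j)) := by positivity
    rw [hti]; linarith
  unfold dfsNextTarget
  rw [max_eq_left, max_eq_left, add_zero]
  · exact Finset.sup'_le _ _ fun j _ => key lbu j
  · exact Finset.sup'_le _ _ fun j _ => key lfu j
end
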